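/- For every prime p, the condition number of the 2×2 matrix V_p equals √p + 1/√p if p ≡ 2 or 3 (mod 4), and equals 5/(2√p) + √p/2 if p ≡ 1 (mod 4). -/
import Mathlib


/-- The Frobenius norm of a real matrix: `√(∑_{i,j} |A_{ij}|²)`. -/
noncomputable def frobNorm {m n : Type*} [Fintype m] [Fintype n]
    (A : Matrix m n ℝ) : ℝ :=
  Real.sqrt (∑ i, ∑ j, |A i j| ^ 2)

/-- The condition number `Cond(A) = ‖A‖ · ‖A⁻¹‖` (Frobenius norm). -/
noncomputable def condNum {n : Type*} [Fintype n] [DecidableEq n]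
    (A : Matrix n n ℝ) : ℝ :=
  frobNorm A * frobNorm A⁻¹

/-- The matrix `V_p`: `[[1, √p],[1, −√p]]` if `p ≡ 2, 3 (mod 4)`, and
`[[1, (1+√p)/2],[1, (1−√p)/2]]` if `p ≡ 1 (mod 4)`. -/
noncomputable def Vp (p : ℕ) : Matrix (Fin 2) (Fin 2) ℝ :=
  if p % 4 = 1 then
    !![1, (1 + Real.sqrt p) / 2; 1, (1 - Real.sqrt p) / 2]
  else
    !![1, Real.sqrt p; 1, -Real.sqrt p]

lemma frobNorm_fin_two (a b c d : ℝ) :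
    frobNorm !![a, b; c, d] = Real.sqrt (a^2 + b^2 + c^2 + d^2) := by
  unfold frobNorm
  rw [Fin.sum_univ_two, Fin.sum_univ_two, Fin.sum_univ_two]
  simp [sq_abs]
  ring_nf

theorem condNum_Vp_eq (p : ℕ) (hp : Nat.Prime p) :
    ((p % 4 = 2 ∨ p % 4 = 3) →
      condNum (Vp p) = Real.sqrt p + 1 / Real.sqrt p) ∧
    (p % 4 = 1 →
      condNum (Vp p) = 5 / (2 * Real.sqrt p) + Real.sqrt p / 2) := by
  have hp0 : (0:ℝ) < p := by exact_mod_cast hp.pos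
  set s := Real.sqrt p with hsdef
  have hs0 : 0 < s := Real.sqrt_pos.mpr hp0
  have hsne : s ≠ 0 := ne_of_gt hs0
  constructor
  · intro h
    have hne : ¬ p % 4 = 1 := by rcases h with h | h <;> omega
    have hV : Vp p = !![1, s; 1, -s] := by rw [Vp, if_neg hne]
    have hVinv : (Vp p)⁻¹ = !![1/2, 1/2; 1/(2*s), -(1/(2*s))] := by
      apply Matrix.inv_eq_right_inv
      rw [hV]
      ext i j
      fin_cases i <;> fin_cases j <;> simp [Matrix.mul_apply, Fin.sum_univ_two] <;> field_simp <;> try ring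
    rw [condNum, hVinv, hV, frobNorm_fin_two, frobNorm_fin_two,
        ← Real.sqrt_mul (by positivity)]
    have key : (1^2 + s^2 + 1^2 + (-s)^2) *
        ((1/2)^2 + (1/2)^2 + (1/(2*s))^2 + (-(1/(2*s)))^2) = (s + 1/s)^2 := by
      field_simp
      ring
    rw [key, Real.sqrt_sq (by positivity)]
  · intro h
    have hV : Vp p = !![1, (1 + s) / 2; 1, (1 - s) / 2] := by rw [Vp, if_pos h]
    have hVinv : (Vp p)⁻¹ = !![(s-1)/(2*s), (1+s)/(2*s); 1/s, -(1/s)] := by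
      apply Matrix.inv_eq_right_inv
      rw [hV]
      ext i j
      fin_cases i <;> fin_cases j <;> simp [Matrix.mul_apply, Fin.sum_univ_two] <;> field_simp <;> try ring
    rw [condNum, hVinv, hV, frobNorm_fin_two, frobNorm_fin_two,
        ← Real.sqrt_mul (by positivity)]
    have key : (1^2 + ((1+s)/2)^2 + 1^2 + ((1-s)/2)^2) *
        (((s-1)/(2*s))^2 + ((1+s)/(2*s))^2 + (1/s)^2 + (-(1/s))^2)
        = (5/(2*s) + s/2)^2 := by
      field_simp
      ring
    rw [key, Real.sqrt_sq (by positivity)]
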